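/- Let g : {ξ_0, ξ_1, ..., ξ_N} → ℝ be a grid function on a uniform partition of [0, 2π] with ξ_j = jh, h = 2π/N, g(ξ_0) = g(ξ_N), identified with the continuous piecewise linear interpolant on [0,2π]. Then the H¹-norm of the piecewise linear function satisfies ‖g‖²_{H¹} ≤ ‖g‖²_{H¹_G} (1 + h²/6), where ‖g‖²_{H¹_G} = h ∑_{j=1}^N (|g_j|² + |δg_j|²) with δg_j = (g_j − g_{j−1})/h. -/

import Mathlib

open MeasureTheory in
lemma pwlin_interval_integral (A B cc ss : ℝ) (hAB : A ≤ B) (f : ℝ → ℝ)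
    (hf : ∀ x ∈ Set.Ioo A B, f x = (cc + (x - A) * ss)^2 + ss^2) :
    IntervalIntegrable f volume A B ∧
    (∫ x in A..B, f x) =
      cc^2*(B-A) + cc*ss*(B-A)^2 + ss^2*(B-A)^3/3 + ss^2*(B-A) := by
  set φ : ℝ → ℝ := fun x => (cc + (x - A) * ss)^2 + ss^2 with hφ
  have hφc : Continuous φ := by fun_prop
  have hBae : ∀ᵐ x : ℝ, x ≠ B := by
    rw [ae_iff]
    simp only [ne_eq, not_not]
    rw [Set.setOf_eq_eq_singleton]
    exact measure_singleton B
  constructor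
  · refine (hφc.intervalIntegrable A B).congr_ae ?_
    rw [Set.uIoc_of_le hAB]
    have h1 : ∀ᵐ x ∂(volume.restrict (Set.Ioc A B)), x ∈ Set.Ioc A B :=
      ae_restrict_mem measurableSet_Ioc
    filter_upwards [h1, ae_restrict_of_ae hBae] with x hx hxB
    exact (hf x ⟨hx.1, lt_of_le_of_ne hx.2 hxB⟩).symm
  · have hcongr : ∫ x in A..B, f x = ∫ x in A..B, φ x := by
      apply intervalIntegral.integral_congr_ae
      filter_upwards [hBae] with x hxB hxI
      rw [Set.uIoc_of_le hAB] at hxI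
      exact hf x ⟨hxI.1, lt_of_le_of_ne hxI.2 hxB⟩
    rw [hcongr]
    set F : ℝ → ℝ := fun x => cc^2*x + ss^2*x + (cc*ss)*(x-A)^2 + (ss^2/3)*(x-A)^3 with hF
    have hderiv : ∀ x ∈ Set.uIcc A B, HasDerivAt F (φ x) x := by
      intro x _
      have h1 : HasDerivAt (fun x : ℝ => x - A) 1 x := (hasDerivAt_id x).sub_const A
      have h2 : HasDerivAt (fun x : ℝ => (x-A)^2) (2*(x-A)) x := by simpa using h1.fun_pow 2
      have h3 : HasDerivAt (fun x : ℝ => (x-A)^3) (3*(x-A)^2) x := by simpa using h1.fun_pow 3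
      have h4 : HasDerivAt F
          (cc^2*1 + ss^2*1 + (cc*ss)*(2*(x-A)) + (ss^2/3)*(3*(x-A)^2)) x := by
        exact (((hasDerivAt_id x).const_mul (cc^2)).add
          ((hasDerivAt_id x).const_mul (ss^2))).add
          ((h2.const_mul (cc*ss))) |>.add (h3.const_mul (ss^2/3))
      convert h4 using 1
      simp only [hφ]; ring
    rw [intervalIntegral.integral_eq_sub_of_hasDerivAt hderiv (hφc.intervalIntegrable A B)]
    simp only [hF]; ring

lemma sum_Icc_one_int (N : ℕ) (F : ℤ → ℝ) :
    ∑ j ∈ Finset.Icc (1:ℤ) (N:ℤ), F j = ∑ k ∈ Finset.range N, F ((k:ℤ)+1) := by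
  have hmap : Finset.Icc (1:ℤ) (N:ℤ) =
      (Finset.range N).map ⟨fun k : ℕ => (k:ℤ)+1, fun a b hab => by simpa using hab⟩ := by
    ext j
    simp only [Finset.mem_Icc, Finset.mem_map, Finset.mem_range, Function.Embedding.coeFn_mk]
    constructor
    · rintro ⟨h1, h2⟩; exact ⟨(j-1).toNat, by omega, show ((j-1).toNat:ℤ)+1 = j by omega⟩
    · rintro ⟨k, hk, rfl⟩; show 1 ≤ (k:ℤ)+1 ∧ (k:ℤ)+1 ≤ N; omega
  rw [hmap, Finset.sum_map]
  rfl

lemma sum_shift (N : ℕ) (g : ℤ → ℝ) (h0 : g (N:ℤ) = g 0) :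
    ∑ k ∈ Finset.range N, (g ((k:ℤ)+1))^2 = ∑ k ∈ Finset.range N, (g (k:ℤ))^2 := by
  have e1 := Finset.sum_range_succ (fun k : ℕ => (g (k:ℤ))^2) N
  have e2 := Finset.sum_range_succ' (fun k : ℕ => (g (k:ℤ))^2) N
  simp only [Nat.cast_add, Nat.cast_one, Nat.cast_zero] at e1 e2
  rw [h0] at e1
  linarith [e1, e2]

open MeasureTheory in
open Real in
/-- The `H¹`-norm of the piecewise linear interpolant of a periodic grid function `g`
on the uniform grid `ξ_j = j h`, `h = 2π/N`, is bounded by the discrete `H¹_G`-norm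
times `(1 + h²/6)`. `G` is the piecewise linear interpolant and `D` its a.e. derivative. -/
theorem pw_linear_H1_le_grid_H1 (N : ℕ) (hN : 2 ≤ N) (h : ℝ) (hh : h = 2 * π / N)
    (g : ℤ → ℝ) (hper : ∀ j : ℤ, g (j + N) = g j)
    (G D : ℝ → ℝ)
    (hG : ∀ j : ℤ, ∀ ξ ∈ Set.Icc ((j - 1 : ℤ) * h) ((j : ℤ) * h),
      G ξ = g (j - 1) + (ξ - (j - 1 : ℤ) * h) * ((g j - g (j - 1)) / h))
    (hD : ∀ j : ℤ, ∀ ξ ∈ Set.Ioo ((j - 1 : ℤ) * h) ((j : ℤ) * h),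
      D ξ = (g j - g (j - 1)) / h) :
    (∫ ξ in (0 : ℝ)..(2 * π), ((G ξ) ^ 2 + (D ξ) ^ 2)) ≤
      (h * ∑ j ∈ Finset.Icc (1 : ℤ) (N : ℤ),
        ((g j) ^ 2 + ((g j - g (j - 1)) / h) ^ 2)) * (1 + h ^ 2 / 6) := by
  have hπ : (0:ℝ) < π := Real.pi_pos
  have hN0 : (0:ℝ) < (N:ℝ) := by
    have : (2:ℝ) ≤ (N:ℝ) := by exact_mod_cast hN
    linarith
  have hh0 : 0 < h := by rw [hh]; positivity
  have h2π : 2 * π = (N:ℝ) * h := by rw [hh]; field_simp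
  -- per-interval facts
  have hallk : ∀ k : ℕ,
      IntervalIntegrable (fun ξ => (G ξ)^2 + (D ξ)^2) volume ((k:ℝ)*h) (((k:ℝ)+1)*h) ∧
      (∫ x in ((k:ℝ)*h)..(((k:ℝ)+1)*h), ((G x)^2 + (D x)^2)) =
        h*(g (k:ℤ))^2 + h^2*(g (k:ℤ))*((g ((k:ℤ)+1) - g (k:ℤ))/h)
          + (h^3/3 + h)*((g ((k:ℤ)+1) - g (k:ℤ))/h)^2 := by
    intro k
    have hGk := hG ((k:ℤ)+1)
    have hDk := hD ((k:ℤ)+1)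
    simp only [add_sub_cancel_right] at hGk hDk
    push_cast at hGk hDk
    have hle : (k:ℝ)*h ≤ ((k:ℝ)+1)*h := by
      have : (0:ℝ) ≤ (k:ℝ) := Nat.cast_nonneg k
      nlinarith
    have haux := pwlin_interval_integral ((k:ℝ)*h) (((k:ℝ)+1)*h) (g (k:ℤ))
      ((g ((k:ℤ)+1) - g (k:ℤ))/h) hle (fun ξ => (G ξ)^2 + (D ξ)^2)
      (fun x hx => by simp only [hGk x (Set.Ioo_subset_Icc_self hx), hDk x hx])
    refine ⟨haux.1, ?_⟩
    rw [haux.2]; ring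
  -- split the integral
  have hsplit := intervalIntegral.sum_integral_adjacent_intervals (μ := volume)
    (f := fun ξ => (G ξ)^2 + (D ξ)^2) (a := fun k : ℕ => (k:ℝ)*h) (n := N)
    (fun k _ => by push_cast; exact (hallk k).1)
  simp only [Nat.cast_zero, zero_mul, Nat.cast_add, Nat.cast_one] at hsplit
  rw [← h2π] at hsplit
  have hLHS : (∫ ξ in (0:ℝ)..(2*π), ((G ξ)^2 + (D ξ)^2)) =
      ∑ k ∈ Finset.range N,
        (h*(g (k:ℤ))^2 + h^2*(g (k:ℤ))*((g ((k:ℤ)+1) - g (k:ℤ))/h)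
          + (h^3/3 + h)*((g ((k:ℤ)+1) - g (k:ℤ))/h)^2) := by
    rw [← hsplit]
    exact Finset.sum_congr rfl (fun k _ => (hallk k).2)
  rw [hLHS, sum_Icc_one_int N (fun j => (g j)^2 + ((g j - g (j-1))/h)^2)]
  simp only [add_sub_cancel_right]
  -- final algebraic inequality
  have hshift : ∑ k ∈ Finset.range N, (g ((k:ℤ)+1))^2 = ∑ k ∈ Finset.range N, (g (k:ℤ))^2 :=
    sum_shift N g (by simpa using hper 0)
  have hmulsum : (h * ∑ k ∈ Finset.range N, ((g ((k:ℤ)+1))^2 + ((g ((k:ℤ)+1) - g (k:ℤ))/h)^2))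
        * (1 + h^2/6)
      = ∑ k ∈ Finset.range N,
        (h * ((g ((k:ℤ)+1))^2 + ((g ((k:ℤ)+1) - g (k:ℤ))/h)^2)) * (1 + h^2/6) := by
    rw [Finset.mul_sum, Finset.sum_mul]
  rw [hmulsum]
  have hpt : ∀ k ∈ Finset.range N,
      (h * ((g ((k:ℤ)+1))^2 + ((g ((k:ℤ)+1) - g (k:ℤ))/h)^2)) * (1 + h^2/6)
      = (h*(g (k:ℤ))^2 + h^2*(g (k:ℤ))*((g ((k:ℤ)+1) - g (k:ℤ))/h)
          + (h^3/3 + h)*((g ((k:ℤ)+1) - g (k:ℤ))/h)^2)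
        + ((h/2)*((g ((k:ℤ)+1))^2 - (g (k:ℤ))^2)
          + ((h^3/3)*((g ((k:ℤ)+1) - g (k:ℤ))/h)^2 + (h^3/6)*(g ((k:ℤ)+1))^2)) := by
    intro k _
    field_simp
    ring
  rw [Finset.sum_congr rfl hpt]
  conv_rhs => rw [Finset.sum_add_distrib]
  have hX : 0 ≤ ∑ k ∈ Finset.range N,
      ((h/2)*((g ((k:ℤ)+1))^2 - (g (k:ℤ))^2)
        + ((h^3/3)*((g ((k:ℤ)+1) - g (k:ℤ))/h)^2 + (h^3/6)*(g ((k:ℤ)+1))^2)) := by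
    rw [Finset.sum_add_distrib]
    have h1 : ∑ k ∈ Finset.range N, (h/2)*((g ((k:ℤ)+1))^2 - (g (k:ℤ))^2) = 0 := by
      rw [← Finset.mul_sum, Finset.sum_sub_distrib, hshift]
      ring
    rw [h1, zero_add]
    apply Finset.sum_nonneg
    intro k _
    have h3 : (0:ℝ) < h^3 := by positivity
    nlinarith [sq_nonneg ((g ((k:ℤ)+1) - g (k:ℤ))/h), sq_nonneg (g ((k:ℤ)+1))]
  linarith
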